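/- (K_α-DR-submodularity of the non-negative PCA objective) Let z¹, …, zᵐ ∈ ℝⁿ and α ∈ {−1, 1}ⁿ be such that αᵢ·zⱼᵢ ≥ 0 for all i ∈ [n] and j ∈ [m] (sign consistency). Define f(x) = −(1/2)·⟨x, A x⟩ where A = Σ_{j=1}^m zʲ·(zʲ)ᵀ. Then f is K_α-DR-submodular on ℝⁿ: for all a, b ∈ ℝⁿ with a ≼_α b, every coordinate i, and every k ≥ 0, one has αᵢ·(f(a + k·eᵢ) − f(a)) ≥ αᵢ·(f(b + k·eᵢ) − f(b)). -/
import Mathlib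


noncomputable section

open Finset

/-- the partial order `a ≼_α b` iff `αᵢaᵢ ≤ αᵢbᵢ` for all `i`. -/
def leA {n : ℕ} (α a b : Fin n → ℝ) : Prop := ∀ i, α i * a i ≤ α i * b i

/-- the non-negative PCA objective `f(x) = −(1/2)·⟨x, A x⟩` with
`A = Σ_j zʲ·(zʲ)ᵀ`, i.e. `A p q = Σ_j zʲₚ·zʲ_q`. -/
noncomputable def nnPCAObj {n m : ℕ} (z : Fin m → Fin n → ℝ) (x : Fin n → ℝ) : ℝ :=
  -(1 / 2) * ∑ p, x p * ∑ q, (∑ j, z j p * z j q) * x q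

lemma nnPCA_diff {n m : ℕ} (z : Fin m → Fin n → ℝ) (i : Fin n) (k : ℝ) (x : Fin n → ℝ) :
    nnPCAObj z (x + k • (Pi.single i 1 : Fin n → ℝ)) - nnPCAObj z x =
      -(k * ∑ q, (∑ j, z j i * z j q) * x q) - (1/2) * k^2 * (∑ j, z j i * z j i) := by
  have hx : ∀ p, (x + k • (Pi.single i 1 : Fin n → ℝ)) p
      = x p + (if p = i then k else 0) := by
    intro p
    simp [Pi.single_apply]
  simp only [nnPCAObj, hx]
  have hinner : ∀ p, ∑ q, (∑ j, z j p * z j q) * (x q + (if q = i then k else 0))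
      = (∑ q, (∑ j, z j p * z j q) * x q) + (∑ j, z j p * z j i) * k := by
    intro p
    rw [Finset.sum_congr rfl (fun q _ => mul_add _ _ _), Finset.sum_add_distrib]
    congr 1
    simp [mul_ite]
  simp only [hinner]
  have houter : ∑ p, (x p + (if p = i then k else 0)) *
      ((∑ q, (∑ j, z j p * z j q) * x q) + (∑ j, z j p * z j i) * k)
      = (∑ p, x p * ((∑ q, (∑ j, z j p * z j q) * x q) + (∑ j, z j p * z j i) * k))
        + k * ((∑ q, (∑ j, z j i * z j q) * x q) + (∑ j, z j i * z j i) * k) := by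
    rw [Finset.sum_congr rfl (fun p _ => add_mul _ _ _), Finset.sum_add_distrib]
    congr 1
    simp [ite_mul]
  rw [houter]
  have hsym : ∑ p, x p * ((∑ j, z j p * z j i) * k)
      = k * ∑ q, (∑ j, z j i * z j q) * x q := by
    rw [Finset.mul_sum]
    apply Finset.sum_congr rfl
    intro p _
    rw [Finset.sum_congr rfl (fun j _ => mul_comm (z j p) (z j i))]
    ring
  have hsplit : ∑ p, x p * ((∑ q, (∑ j, z j p * z j q) * x q) + (∑ j, z j p * z j i) * k)
      = (∑ p, x p * ∑ q, (∑ j, z j p * z j q) * x q)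
        + ∑ p, x p * ((∑ j, z j p * z j i) * k) := by
    rw [← Finset.sum_add_distrib]
    exact Finset.sum_congr rfl fun p _ => mul_add _ _ _
  rw [hsplit, hsym]
  ring

/-- Under sign consistency, the NN-PCA objective is `K_α`-DR-submodular on `ℝⁿ`. -/
theorem stmt17 {n m : ℕ} (hn : 1 ≤ n) (hm : 1 ≤ m)
    (z : Fin m → Fin n → ℝ)
    (α : Fin n → ℝ) (hα : ∀ i, α i = 1 ∨ α i = -1)
    (hsign : ∀ (i : Fin n) (j : Fin m), 0 ≤ α i * z j i) :
    ∀ a b : Fin n → ℝ, leA α a b → ∀ (i : Fin n) (k : ℝ), 0 ≤ k →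
      α i * (nnPCAObj z (a + k • (Pi.single i 1 : Fin n → ℝ)) - nnPCAObj z a) ≥
        α i * (nnPCAObj z (b + k • (Pi.single i 1 : Fin n → ℝ)) - nnPCAObj z b) := by
  intro a b hab i k hk
  rw [nnPCA_diff, nnPCA_diff]
  have hαsq : ∀ q, α q * α q = 1 := by
    intro q; rcases hα q with h | h <;> rw [h] <;> ring
  have key : 0 ≤ α i * ∑ q, (∑ j, z j i * z j q) * b q
      - α i * ∑ q, (∑ j, z j i * z j q) * a q := by
    have heq : α i * ∑ q, (∑ j, z j i * z j q) * b q
        - α i * ∑ q, (∑ j, z j i * z j q) * a q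
        = ∑ q, ∑ j, (α i * z j i) * (α q * z j q) * (α q * b q - α q * a q) := by
      rw [← mul_sub, ← Finset.sum_sub_distrib, Finset.mul_sum]
      apply Finset.sum_congr rfl
      intro q _
      rw [← mul_sub, Finset.sum_mul, Finset.mul_sum]
      apply Finset.sum_congr rfl
      intro j _
      linear_combination (α i * z j i * z j q * (a q - b q)) * hαsq q
    rw [heq]
    apply Finset.sum_nonneg
    intro q _
    apply Finset.sum_nonneg
    intro j _
    exact mul_nonneg (mul_nonneg (hsign i j) (hsign q j)) (sub_nonneg.2 (hab q))
  nlinarith [mul_nonneg hk key]
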